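/- arXiv:2209.07454 — 3 statements merged into one kernel-verified Lean document; each statement's English description precedes it below -/
import Mathlib

section
/- (Deterministic core of the guarantee with stochastic rewards and adversarial constraints.) Under all the hypotheses of the adversarial-adversarial guarantee — namely: T, T₁ ∈ ℕ with 1 ≤ T₁ ≤ T, ρ ≥ 0, 0 < ρ̃ ≤ ρ, x_1,…,x_T ∈ X, λ_1,…,λ_{T₁} ∈ D_{ρ̃}, λ_{T₁+1},…,λ_T ∈ Δ_m, f_t : X → [0,1], g_t : X → [−1,1]^m, ξ*, ξ° ∈ Ξ with g_{t,i}(ξ°) ≤ −ρ for all t, i, constants M, R^P₁, R^D₁, R^P₂, R^D₂ ≥ 0, with (i) primal regret Σ_{t=1}^{T₁}(f_t(x_t) − ⟨λ_t,g_t(x_t)⟩) ≥ Σ_{t=1}^{T₁}(f_t(ξ) − ⟨λ_t,g_t(ξ)⟩) − (1+2/ρ̃)R^P₁ for every ξ ∈ Ξ, (ii) dual regret Σ_{t=1}^{T₁}⟨λ_t,g_t(x_t)⟩ ≥ Σ_{t=1}^{T₁}⟨λ,g_t(x_t)⟩ − R^D₁/ρ̃ for every λ ∈ D_{ρ̃},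 (iii) T₁ = T or max_i Σ_{t=1}^{T₁} g_{t,i}(x_t) ≥ (T−T₁)ρ̃, (iv) Σ_{t=1}^{T₁} g_{t,i}(x_t) ≤ (T−T₁)ρ̃ + M for every i, (v) recovery primal regret Σ_{t=T₁+1}^{T}(−⟨λ_t,g_t(x_t)⟩) ≥ Σ_{t=T₁+1}^{T}(−⟨λ_t,g_t(ξ°)⟩) − 2R^P₂, (vi) recovery dual regret Σ_{t=T₁+1}^{T}⟨λ_t,g_t(x_t)⟩ ≥ Σ_{t=T₁+1}^{T}⟨λ,g_t(x_t)⟩ − R^D₂ for every λ ∈ Δ_m — assume in addition that there is a measurable f̄ : X → [0,1] and E ≥ 0 with |Σ_{t=1}^{T} f_t(x_t) − Σ_{t=1}^{T} f̄(x_t)| ≤ E and |Σ_{t=1}^{T} f_t(ξ*) − T·f̄(ξ*)| ≤ E. Then Σ_{t=1}^{T} f̄(x_t) ≥ (ρ/(1+ρ))·T·f̄(ξ*) − (1+2/ρ̃)R^P₁ − R^D₁/ρ̃ − 2E, and for every i ∈ [m], Σ_{t=1}^{T} g_{t,i}(x_t) ≤ M + 2R^P₂ + R^D₂. -/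
/-!
Mixing ξ* and ξ° with weights ρ/(1+ρ) and 1/(1+ρ) gives a distribution satisfying every
constraint in expectation, because g ≤ 1 and g(ξ°) ≤ -ρ. The play-phase primal regret against
this mixture bounds the play-phase Lagrangian from below by ρ/(1+ρ) Σ f(ξ*). If the play phase
stopped early, some coordinate i has violation at least (T - T₁)ρ̃, so the dual regret against
e_i/ρ̃ shows that the penalty term is at least T - T₁, which pays for the rewards of the recovery
rounds. During recovery the primal regret against ξ° and the dual regret against e_i show that the
i-th violation drops by at least (T - T₁)ρ ≥ (T - T₁)ρ̃, cancelling the play-phase allowance.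
-/

open MeasureTheory Finset unitInterval

lemma sum_Icc_add_sum_Icc_succ {T₁ T : ℕ} (h : T₁ ≤ T) (F : ℕ → ℝ) :
    ∑ t ∈ Icc 1 T₁, F t + ∑ t ∈ Icc (T₁ + 1) T, F t = ∑ t ∈ Icc 1 T, F t := by
  simp only [Icc_add_one_left_eq_Ioc,
    show Icc 1 = Ioc 0 from funext fun n => Icc_add_one_left_eq_Ioc 0 n]
  exact sum_Ioc_consecutive F (Nat.zero_le _) h

section Mixture

variable {X : Type*} [MeasurableSpace X]

lemma integrable_of_mem_Icc {μ : Measure X} [IsFiniteMeasure μ] {h : X → ℝ} {a b : ℝ}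
    (hm : Measurable h) (hb : ∀ y, h y ∈ Set.Icc a b) : Integrable h μ :=
  .of_bound hm.aestronglyMeasurable (max |a| |b|)
    (ae_of_all _ fun y => abs_le_max_abs_abs (hb y).1 (hb y).2)

lemma integral_le_const {μ : Measure X} [IsProbabilityMeasure μ] {h : X → ℝ} {c : ℝ}
    (hi : Integrable h μ) (hc : ∀ y, h y ≤ c) : ∫ y, h y ∂μ ≤ c := by
  simpa using integral_mono hi (integrable_const c) hc

namespace MeasureTheory.ProbabilityMeasure

noncomputable def mixture (p : I) (μ ν : ProbabilityMeasure X) : ProbabilityMeasure X :=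
  ⟨toNNReal p • (μ : Measure X) + toNNReal (σ p) • (ν : Measure X), inferInstance⟩

lemma integral_mixture (p : I) (μ ν : ProbabilityMeasure X) {h : X → ℝ}
    (hμ : Integrable h μ) (hν : Integrable h ν) :
    ∫ y, h y ∂(mixture p μ ν : Measure X) =
      p * ∫ y, h y ∂(μ : Measure X) + (1 - p) * ∫ y, h y ∂(ν : Measure X) := by
  simp [mixture, integral_add_measure hμ.smul_measure_nnreal hν.smul_measure_nnreal,
    integral_smul_nnreal_measure, NNReal.smul_def, coe_symm_eq]

/-- The weight `ρ / (1 + ρ)` is chosen so that `ρ / (1 + ρ) * 1 + 1 / (1 + ρ) * (-ρ) = 0`: mixed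
with a point of margin `ρ`, it makes every constraint bounded by `1` hold in expectation. -/
noncomputable def marginWeight {ρ : ℝ} (hρ : 0 ≤ ρ) : I :=
  ⟨ρ / (1 + ρ), by positivity, div_le_one_of_le₀ (by linarith) (by positivity)⟩

lemma coe_marginWeight {ρ : ℝ} (hρ : 0 ≤ ρ) : (marginWeight hρ : ℝ) = ρ / (1 + ρ) := rfl

lemma integral_mixture_marginWeight_nonpos {ρ : ℝ} (hρ : 0 ≤ ρ) (μ ν : ProbabilityMeasure X)
    {h : X → ℝ} (hm : Measurable h) (hb : ∀ y, h y ∈ Set.Icc (-1 : ℝ) 1)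
    (hν : ∫ y, h y ∂(ν : Measure X) ≤ -ρ) :
    ∫ y, h y ∂(mixture (marginWeight hρ) μ ν : Measure X) ≤ 0 := by
  have hμ : ∫ y, h y ∂(μ : Measure X) ≤ 1 :=
    integral_le_const (integrable_of_mem_Icc hm hb) fun y => (hb y).2
  rw [integral_mixture _ _ _ (integrable_of_mem_Icc hm hb) (integrable_of_mem_Icc hm hb)]
  have hq : 1 - ρ / (1 + ρ) = 1 / (1 + ρ) := by field_simp; ring
  calc _ ≤ ρ / (1 + ρ) * 1 + 1 / (1 + ρ) * (-ρ) := by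
        rw [coe_marginWeight, hq]; gcongr
    _ = 0 := by field_simp; ring

end MeasureTheory.ProbabilityMeasure

end Mixture

section Regret

variable {ι : Type*} [Fintype ι] [DecidableEq ι]

lemma sum_sum_single_mul (s : Finset ℕ) (G : ℕ → ι → ℝ) (i : ι) (c : ℝ) :
    ∑ t ∈ s, ∑ j, (Pi.single i c : ι → ℝ) j * G t j = c * ∑ t ∈ s, G t i := by
  rw [mul_sum]
  exact sum_congr rfl fun t _ => single_dotProduct (v := G t) c i

lemma sum_le_of_recovery_regret (s : Finset ℕ) (lam G c : ℕ → ι → ℝ) (ρ RP RD : ℝ)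
    (hlam : ∀ t ∈ s, (∀ i, 0 ≤ lam t i) ∧ ∑ i, lam t i = 1)
    (hc : ∀ t ∈ s, ∀ i, c t i ≤ -ρ)
    (hprimal : ∑ t ∈ s, (-(∑ i, lam t i * G t i)) ≥
      ∑ t ∈ s, (-(∑ i, lam t i * c t i)) - RP)
    (hdual : ∀ l : ι → ℝ, (∀ i, 0 ≤ l i) → ∑ i, l i = 1 →
      ∑ t ∈ s, ∑ i, lam t i * G t i ≥ ∑ t ∈ s, ∑ i, l i * G t i - RD) (i : ι) :
    ∑ t ∈ s, G t i ≤ -(#s * ρ) + RP + RD := by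
  have hmargin : ∀ t ∈ s, ∑ j, lam t j * c t j ≤ -ρ := fun t ht => calc
    ∑ j, lam t j * c t j ≤ ∑ j, lam t j * -ρ :=
      sum_le_sum fun j _ => mul_le_mul_of_nonneg_left (hc t ht j) ((hlam t ht).1 j)
    _ = -ρ := by rw [← sum_mul, (hlam t ht).2, one_mul]
  have hvertex :=
    hdual (Pi.single i 1) ((Pi.single_nonneg (α := fun _ => ℝ)).2 zero_le_one) (by simp)
  rw [sum_sum_single_mul, one_mul] at hvertex
  have := sum_le_sum hmargin
  simp only [sum_neg_distrib, sum_const, nsmul_eq_mul] at hprimal this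
  linarith

lemma le_sum_of_play_dual_regret (s : Finset ℕ) (lam G : ℕ → ι → ℝ) {r : ℝ} (hr : 0 < r)
    (K R : ℝ)
    (hdual : ∀ l : ι → ℝ, (∀ i, 0 ≤ l i) → ∑ i, l i ≤ 1 / r →
      ∑ t ∈ s, ∑ i, lam t i * G t i ≥ ∑ t ∈ s, ∑ i, l i * G t i - R)
    (hstop : K ≤ 0 ∨ ∃ i, K * r ≤ ∑ t ∈ s, G t i) :
    K - R ≤ ∑ t ∈ s, ∑ i, lam t i * G t i := by
  rcases hstop with hK | ⟨i, hi⟩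
  · have := hdual 0 (fun _ => le_rfl) (by simp; positivity)
    simp only [Pi.zero_apply, zero_mul, sum_const_zero] at this
    linarith
  · have := hdual (Pi.single i (1 / r))
      ((Pi.single_nonneg (α := fun _ => ℝ)).2 (by positivity)) (by simp)
    rw [sum_sum_single_mul] at this
    have hK : K ≤ 1 / r * ∑ t ∈ s, G t i := by
      rwa [one_div_mul_eq_div, le_div_iff₀ hr]
    linarith

end Regret

open ProbabilityMeasure in
lemma le_of_play_primal_regret {X : Type*} [MeasurableSpace X] {ι : Type*} [Fintype ι]
    (s : Finset ℕ) (lam : ℕ → ι → ℝ) (f : ℕ → X → ℝ) (g : ℕ → ι → X → ℝ)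
    {ρ : ℝ} (hρ : 0 ≤ ρ) (P R : ℝ) (hlam : ∀ t ∈ s, ∀ i, 0 ≤ lam t i)
    (hfm : ∀ t, Measurable (f t)) (hf01 : ∀ t y, f t y ∈ Set.Icc (0:ℝ) 1)
    (hgm : ∀ t i, Measurable (g t i)) (hg1 : ∀ t i y, g t i y ∈ Set.Icc (-1:ℝ) 1)
    (ξs ξo : ProbabilityMeasure X)
    (hfeas : ∀ t ∈ s, ∀ i, ∫ y, g t i y ∂(ξo : Measure X) ≤ -ρ)
    (hprimal : ∀ ξ : ProbabilityMeasure X, P ≥ ∑ t ∈ s, ((∫ y, f t y ∂(ξ : Measure X)) -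
      ∑ i, lam t i * ∫ y, g t i y ∂(ξ : Measure X)) - R) :
    ρ / (1 + ρ) * ∑ t ∈ s, ∫ y, f t y ∂(ξs : Measure X) - R ≤ P := by
  set p := marginWeight hρ
  refine le_trans ?_ (hprimal (mixture p ξs ξo))
  rw [mul_sum]
  gcongr with t ht
  have hg : ∑ i, lam t i * ∫ y, g t i y ∂(mixture p ξs ξo : Measure X) ≤ 0 :=
    sum_nonpos fun i _ => mul_nonpos_of_nonneg_of_nonpos (hlam t ht i)
      (integral_mixture_marginWeight_nonpos hρ ξs ξo (hgm t i) (hg1 t i) (hfeas t ht i))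
  have hf : 0 ≤ (1 - p) * ∫ y, f t y ∂(ξo : Measure X) :=
    mul_nonneg (sub_nonneg.2 p.2.2) (integral_nonneg fun y => (hf01 t y).1)
  rw [integral_mixture _ _ _ (integrable_of_mem_Icc (hfm t) (hf01 t))
    (integrable_of_mem_Icc (hfm t) (hf01 t))]
  rw [coe_marginWeight] at hf ⊢
  linarith

theorem statement14_general {X : Type} [MeasurableSpace X] {m : ℕ}
    (T T₁ : ℕ) (hTT : T₁ ≤ T)
    (ρt ρ : ℝ) (hρ : 0 ≤ ρ) (hρt : 0 < ρt) (hρtρ : ρt ≤ ρ)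
    (x : ℕ → X) (lam : ℕ → Fin m → ℝ)
    -- play-phase duals lie in `D_{ρ̃}`, recovery-phase duals lie in `Δ_m`
    (hlam1 : ∀ t ∈ Finset.Icc 1 T₁, (∀ i, 0 ≤ lam t i) ∧ ∑ i, lam t i ≤ 1 / ρt)
    (hlam2 : ∀ t ∈ Finset.Icc (T₁ + 1) T, (∀ i, 0 ≤ lam t i) ∧ ∑ i, lam t i = 1)
    (f : ℕ → X → ℝ) (g : ℕ → Fin m → X → ℝ)
    (hfm : ∀ t, Measurable (f t)) (hf01 : ∀ t y, f t y ∈ Set.Icc (0:ℝ) 1)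
    (hgm : ∀ t i, Measurable (g t i)) (hg1 : ∀ t i y, g t i y ∈ Set.Icc (-1:ℝ) 1)
    (ξs ξo : ProbabilityMeasure X)
    -- ξ° is strictly feasible by margin ρ for every round's constraints
    (hfeaso : ∀ t ∈ Finset.Icc 1 T, ∀ i, ∫ y, g t i y ∂(ξo : Measure X) ≤ -ρ)
    (M RP1 RD1 RP2 RD2 : ℝ)
    -- (i) play-phase primal regret bound against every fixed mixture
    (h1 : ∀ ξ : ProbabilityMeasure X,
          ∑ t ∈ Finset.Icc 1 T₁, (f t (x t) - ∑ i, lam t i * g t i (x t)) ≥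
          ∑ t ∈ Finset.Icc 1 T₁, ((∫ y, f t y ∂(ξ : Measure X)) -
            ∑ i, lam t i * ∫ y, g t i y ∂(ξ : Measure X)) - (1 + 2 / ρt) * RP1)
    -- (ii) play-phase dual regret bound
    (h2 : ∀ l : Fin m → ℝ, (∀ i, 0 ≤ l i) → (∑ i, l i ≤ 1 / ρt) →
          ∑ t ∈ Finset.Icc 1 T₁, ∑ i, lam t i * g t i (x t) ≥
          ∑ t ∈ Finset.Icc 1 T₁, ∑ i, l i * g t i (x t) - RD1 / ρt)
    -- (iii) stopping condition of the play phase
    (h3 : T₁ = T ∨ ∃ i, ((T : ℝ) - (T₁ : ℝ)) * ρt ≤ ∑ t ∈ Finset.Icc 1 T₁, g t i (x t))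
    -- (iv) play-phase violation threshold
    (h4 : ∀ i, ∑ t ∈ Finset.Icc 1 T₁, g t i (x t) ≤ ((T : ℝ) - (T₁ : ℝ)) * ρt + M)
    -- (v) recovery-phase primal regret bound
    (h5 : ∑ t ∈ Finset.Icc (T₁ + 1) T, (-(∑ i, lam t i * g t i (x t))) ≥
          ∑ t ∈ Finset.Icc (T₁ + 1) T,
            (-(∑ i, lam t i * ∫ y, g t i y ∂(ξo : Measure X))) - 2 * RP2)
    -- (vi) recovery-phase dual regret bound
    (h6 : ∀ l : Fin m → ℝ, (∀ i, 0 ≤ l i) → (∑ i, l i = 1) →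
          ∑ t ∈ Finset.Icc (T₁ + 1) T, ∑ i, lam t i * g t i (x t) ≥
          ∑ t ∈ Finset.Icc (T₁ + 1) T, ∑ i, l i * g t i (x t) - RD2)
    -- additional stochastic-reward hypotheses
    (fbar : X → ℝ)
    (E : ℝ) (hE : 0 ≤ E)
    (h7 : |∑ t ∈ Finset.Icc 1 T, f t (x t) - ∑ t ∈ Finset.Icc 1 T, fbar (x t)| ≤ E)
    (h8 : |∑ t ∈ Finset.Icc 1 T, (∫ y, f t y ∂(ξs : Measure X)) -
            (T : ℝ) * ∫ y, fbar y ∂(ξs : Measure X)| ≤ E) :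
    (∑ t ∈ Finset.Icc 1 T, fbar (x t) ≥
      (ρ / (1 + ρ)) * ((T : ℝ) * ∫ y, fbar y ∂(ξs : Measure X))
        - (1 + 2 / ρt) * RP1 - RD1 / ρt - 2 * E) ∧
    (∀ i, ∑ t ∈ Finset.Icc 1 T, g t i (x t) ≤ M + 2 * RP2 + RD2) := by
  have hT : (T₁ : ℝ) ≤ T := Nat.cast_le.2 hTT
  refine ⟨?_, fun i => ?_⟩
  · have ha : 0 ≤ ρ / (1 + ρ) := by positivity
    have ha1 : ρ / (1 + ρ) ≤ 1 := div_le_one_of_le₀ (by linarith) (by positivity)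
    have hprimal := le_of_play_primal_regret (Icc 1 T₁) lam f g hρ _ _
      (fun t ht => (hlam1 t ht).1) hfm hf01 hgm hg1 ξs ξo
      (fun t ht => hfeaso t (Icc_subset_Icc_right hTT ht)) h1
    have hdual := le_sum_of_play_dual_regret (Icc 1 T₁) lam (fun t i => g t i (x t)) hρt
      ((T : ℝ) - T₁) _ h2 (h3.imp (fun h => by simp [h]) id)
    have hbenchmark : ∑ t ∈ Icc (T₁ + 1) T, ∫ y, f t y ∂(ξs : Measure X) ≤ T - T₁ := by
      simpa [Nat.cast_sub hTT] using sum_le_card_nsmul (Icc (T₁ + 1) T) _ 1 fun t _ =>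
        integral_le_const (μ := ξs) (integrable_of_mem_Icc (hfm t) (hf01 t)) fun y => (hf01 t y).2
    have hrewards : 0 ≤ ∑ t ∈ Icc (T₁ + 1) T, f t (x t) := sum_nonneg fun t _ => (hf01 t (x t)).1
    rw [sum_sub_distrib] at hprimal
    rw [← sum_Icc_add_sum_Icc_succ hTT] at h7 h8
    linarith [(abs_le.1 h7).2, mul_le_mul_of_nonneg_left (abs_le.1 h8).1 ha,
      mul_le_mul_of_nonneg_left hbenchmark ha, mul_le_of_le_one_left hE ha1,
      mul_le_of_le_one_left (sub_nonneg.2 hT) ha1]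
  · have hrecovery := sum_le_of_recovery_regret (Icc (T₁ + 1) T) lam (fun t i => g t i (x t))
      (fun t i => ∫ y, g t i y ∂(ξo : Measure X)) ρ _ _ hlam2
      (fun t ht => hfeaso t (Icc_subset_Icc (Nat.le_add_left 1 T₁) le_rfl ht)) h5 h6 i
    rw [Nat.card_Icc, Nat.add_sub_add_right, Nat.cast_sub hTT] at hrecovery
    have hgap : ((T : ℝ) - T₁) * ρt ≤ (T - T₁) * ρ := mul_le_mul_of_nonneg_left hρtρ (by linarith)
    rw [← sum_Icc_add_sum_Icc_succ hTT]
    linarith [h4 i]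

/-- Deterministic core of the guarantee with stochastic rewards and adversarial
constraints. -/
theorem statement14 {X : Type} [MeasurableSpace X] {m : ℕ} (hm : 0 < m)
    (T T₁ : ℕ) (hT₁ : 1 ≤ T₁) (hTT : T₁ ≤ T)
    (ρt ρ : ℝ) (hρ : 0 ≤ ρ) (hρt : 0 < ρt) (hρtρ : ρt ≤ ρ)
    (x : ℕ → X) (lam : ℕ → Fin m → ℝ)
    -- play-phase duals lie in `D_{ρ̃}`, recovery-phase duals lie in `Δ_m`
    (hlam1 : ∀ t ∈ Finset.Icc 1 T₁, (∀ i, 0 ≤ lam t i) ∧ ∑ i, lam t i ≤ 1 / ρt)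
    (hlam2 : ∀ t ∈ Finset.Icc (T₁ + 1) T, (∀ i, 0 ≤ lam t i) ∧ ∑ i, lam t i = 1)
    (f : ℕ → X → ℝ) (g : ℕ → Fin m → X → ℝ)
    (hfm : ∀ t, Measurable (f t)) (hf01 : ∀ t y, f t y ∈ Set.Icc (0:ℝ) 1)
    (hgm : ∀ t i, Measurable (g t i)) (hg1 : ∀ t i y, g t i y ∈ Set.Icc (-1:ℝ) 1)
    (ξs ξo : ProbabilityMeasure X)
    -- ξ° is strictly feasible by margin ρ for every round's constraints
    (hfeaso : ∀ t ∈ Finset.Icc 1 T, ∀ i, ∫ y, g t i y ∂(ξo : Measure X) ≤ -ρ)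
    (M RP1 RD1 RP2 RD2 : ℝ)
    (hM : 0 ≤ M) (hRP1 : 0 ≤ RP1) (hRD1 : 0 ≤ RD1) (hRP2 : 0 ≤ RP2) (hRD2 : 0 ≤ RD2)
    -- (i) play-phase primal regret bound against every fixed mixture
    (h1 : ∀ ξ : ProbabilityMeasure X,
          ∑ t ∈ Finset.Icc 1 T₁, (f t (x t) - ∑ i, lam t i * g t i (x t)) ≥
          ∑ t ∈ Finset.Icc 1 T₁, ((∫ y, f t y ∂(ξ : Measure X)) -
            ∑ i, lam t i * ∫ y, g t i y ∂(ξ : Measure X)) - (1 + 2 / ρt) * RP1)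
    -- (ii) play-phase dual regret bound
    (h2 : ∀ l : Fin m → ℝ, (∀ i, 0 ≤ l i) → (∑ i, l i ≤ 1 / ρt) →
          ∑ t ∈ Finset.Icc 1 T₁, ∑ i, lam t i * g t i (x t) ≥
          ∑ t ∈ Finset.Icc 1 T₁, ∑ i, l i * g t i (x t) - RD1 / ρt)
    -- (iii) stopping condition of the play phase
    (h3 : T₁ = T ∨ ∃ i, ((T : ℝ) - (T₁ : ℝ)) * ρt ≤ ∑ t ∈ Finset.Icc 1 T₁, g t i (x t))
    -- (iv) play-phase violation threshold
    (h4 : ∀ i, ∑ t ∈ Finset.Icc 1 T₁, g t i (x t) ≤ ((T : ℝ) - (T₁ : ℝ)) * ρt + M)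
    -- (v) recovery-phase primal regret bound
    (h5 : ∑ t ∈ Finset.Icc (T₁ + 1) T, (-(∑ i, lam t i * g t i (x t))) ≥
          ∑ t ∈ Finset.Icc (T₁ + 1) T,
            (-(∑ i, lam t i * ∫ y, g t i y ∂(ξo : Measure X))) - 2 * RP2)
    -- (vi) recovery-phase dual regret bound
    (h6 : ∀ l : Fin m → ℝ, (∀ i, 0 ≤ l i) → (∑ i, l i = 1) →
          ∑ t ∈ Finset.Icc (T₁ + 1) T, ∑ i, lam t i * g t i (x t) ≥
          ∑ t ∈ Finset.Icc (T₁ + 1) T, ∑ i, l i * g t i (x t) - RD2)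
    -- additional stochastic-reward hypotheses
    (fbar : X → ℝ) (hfbm : Measurable fbar) (hfb01 : ∀ y, fbar y ∈ Set.Icc (0:ℝ) 1)
    (E : ℝ) (hE : 0 ≤ E)
    (h7 : |∑ t ∈ Finset.Icc 1 T, f t (x t) - ∑ t ∈ Finset.Icc 1 T, fbar (x t)| ≤ E)
    (h8 : |∑ t ∈ Finset.Icc 1 T, (∫ y, f t y ∂(ξs : Measure X)) -
            (T : ℝ) * ∫ y, fbar y ∂(ξs : Measure X)| ≤ E) :
    (∑ t ∈ Finset.Icc 1 T, fbar (x t) ≥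
      (ρ / (1 + ρ)) * ((T : ℝ) * ∫ y, fbar y ∂(ξs : Measure X))
        - (1 + 2 / ρt) * RP1 - RD1 / ρt - 2 * E) ∧
    (∀ i, ∑ t ∈ Finset.Icc 1 T, g t i (x t) ≤ M + 2 * RP2 + RD2) :=
  statement14_general T T₁ hTT ρt ρ hρ hρt hρtρ x lam hlam1 hlam2 f g hfm hf01 hgm hg1 ξs ξo hfeaso
    M RP1 RD1 RP2 RD2 h1 h2 h3 h4 h5 h6 fbar E hE h7 h8
end

section
/- (The empirical estimator never overestimates the feasibility parameter.) Let T₀ ∈ ℕ with T₀ ≥ 1, let x_1,…,x_{T₀} ∈ X, constraint functions g_t : X → [−1,1]^m, a measurable ḡ : X → [−1,1]^m, and constants ρ ∈ ℝ, E ≥ 0. Assume: (i) for every i ∈ [m], |Σ_{t=1}^{T₀} g_{t,i}(x_t) − Σ_{t=1}^{T₀} ḡ_i(x_t)| ≤ E; (ii) for every ξ ∈ Ξ, min_{i∈[m]} (−ḡ_i(ξ)) ≤ ρ. Then the estimator ρ̂ := −(1/T₀)·( max_{i∈[m]} Σ_{t=1}^{T₀} g_{t,i}(x_t) + E ) satisfies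 ρ̂ ≤ ρ. -/
/-!
Average the hypothesis on the mixtures over the empirical measure `ξ = (1/T₀) Σ_t δ_{x_t}`:
there `ḡ_i(ξ)` is the trajectory average of `ḡ_i`, which by the concentration bound is at most
`(max_j Σ_t g_{t,j}(x_t) + E) / T₀` for every `i`.
-/

open MeasureTheory Finset ENNReal

namespace MeasureTheory.Measure

variable {X ι : Type*} [MeasurableSpace X]

noncomputable def empirical (s : Finset ι) (f : ι → X) : Measure X :=
  (#s : ℝ≥0∞)⁻¹ • ∑ i ∈ s, dirac (f i)

theorem isProbabilityMeasure_empirical {s : Finset ι} (hs : s.Nonempty) (f : ι → X) :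
    IsProbabilityMeasure (empirical s f) := by
  constructor
  simp only [empirical, smul_apply, finsetSum_apply, measure_univ, sum_const, nsmul_eq_mul,
    mul_one, smul_eq_mul]
  exact ENNReal.inv_mul_cancel (by simpa using hs.ne_empty) (natCast_ne_top _)

theorem integral_empirical (s : Finset ι) (f : ι → X) {h : X → ℝ} (hh : Measurable h) :
    ∫ y, h y ∂(empirical s f) = (#s : ℝ)⁻¹ * ∑ i ∈ s, h (f i) := by
  rw [empirical, integral_smul_measure, integral_finsetSum_measure fun i _ =>
    integrable_dirac' hh.stronglyMeasurable enorm_lt_top]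
  simp [integral_dirac' _ _ hh.stronglyMeasurable]

end MeasureTheory.Measure

theorem neg_mul_ciSup_add_le_ciInf {ι : Type*} [Finite ι] [Nonempty ι] {S B : ι → ℝ} {c E : ℝ}
    (hc : 0 ≤ c) (hB : ∀ i, B i ≤ S i + E) :
    -(c * ((⨆ i, S i) + E)) ≤ ⨅ i, -(c * B i) := by
  refine le_ciInf fun i => neg_le_neg (mul_le_mul_of_nonneg_left ?_ hc)
  exact (hB i).trans (add_le_add_left (le_ciSup (Set.finite_range S).bddAbove i) E)

theorem statement15_general {X : Type} [MeasurableSpace X] {m : ℕ} (hm : 0 < m)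
    (T₀ : ℕ) (hT₀ : 1 ≤ T₀)
    (x : ℕ → X)
    (g : ℕ → Fin m → X → ℝ)
    (gbar : Fin m → X → ℝ) (hgbm : ∀ i, Measurable (gbar i))
    (ρ E : ℝ)
    -- (i) concentration of the constraints along the trajectory
    (h1 : ∀ i, |∑ t ∈ Finset.Icc 1 T₀, g t i (x t) -
            ∑ t ∈ Finset.Icc 1 T₀, gbar i (x t)| ≤ E)
    -- (ii) every mixture satisfies `min_i (−ḡ_i(ξ)) ≤ ρ`
    (h2 : ∀ ξ : ProbabilityMeasure X, (⨅ i, -(∫ y, gbar i y ∂(ξ : Measure X))) ≤ ρ) :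
    -(1 / (T₀ : ℝ)) * ((⨆ i, ∑ t ∈ Finset.Icc 1 T₀, g t i (x t)) + E) ≤ ρ := by
  have : Nonempty (Fin m) := ⟨⟨0, hm⟩⟩
  have hξ := Measure.isProbabilityMeasure_empirical (nonempty_Icc.2 hT₀) x
  refine le_trans ?_ (h2 ⟨_, hξ⟩)
  simp only [ProbabilityMeasure.coe_mk, Measure.integral_empirical _ _ (hgbm _), Nat.card_Icc,
    add_tsub_cancel_right, neg_mul, one_div]
  exact neg_mul_ciSup_add_le_ciInf (by positivity) fun i => by linarith [(abs_le.mp (h1 i)).1]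

/-- The empirical estimator `ρ̂ = −(1/T₀)(max_i Σ_t g_{t,i}(x_t) + E)` never overestimates
the feasibility parameter `ρ`. -/
theorem statement15 {X : Type} [MeasurableSpace X] {m : ℕ} (hm : 0 < m)
    (T₀ : ℕ) (hT₀ : 1 ≤ T₀)
    (x : ℕ → X)
    (g : ℕ → Fin m → X → ℝ)
    (hgm : ∀ t i, Measurable (g t i)) (hg1 : ∀ t i y, g t i y ∈ Set.Icc (-1:ℝ) 1)
    (gbar : Fin m → X → ℝ) (hgbm : ∀ i, Measurable (gbar i))
    (hgb1 : ∀ i y, gbar i y ∈ Set.Icc (-1:ℝ) 1)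
    (ρ E : ℝ) (hE : 0 ≤ E)
    -- (i) concentration of the constraints along the trajectory
    (h1 : ∀ i, |∑ t ∈ Finset.Icc 1 T₀, g t i (x t) -
            ∑ t ∈ Finset.Icc 1 T₀, gbar i (x t)| ≤ E)
    -- (ii) every mixture satisfies `min_i (−ḡ_i(ξ)) ≤ ρ`
    (h2 : ∀ ξ : ProbabilityMeasure X, (⨅ i, -(∫ y, gbar i y ∂(ξ : Measure X))) ≤ ρ) :
    -(1 / (T₀ : ℝ)) * ((⨆ i, ∑ t ∈ Finset.Icc 1 T₀, g t i (x t)) + E) ≤ ρ :=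
  statement15_general hm T₀ hT₀ x g gbar hgbm ρ E h1 h2
end

section
/- (The empirical estimator is at least half the feasibility parameter.) Let T₀ ∈ ℕ with T₀ ≥ 1, let x_1,…,x_{T₀} ∈ X, λ_1,…,λ_{T₀} ∈ Δ_m, constraint functions g_t : X → [−1,1]^m, a measurable ḡ : X → [−1,1]^m, ξ° ∈ Ξ with ḡ_i(ξ°) ≤ −ρ for all i ∈ [m], and constants ρ ∈ ℝ, R^P, R^D, E ≥ 0. Assume: (i) Σ_{t=1}^{T₀}(−⟨λ_t, g_t(x_t)⟩) ≥ Σ_{t=1}^{T₀}(−⟨λ_t, g_t(ξ°)⟩) − 2·R^P; (ii) for every λ ∈ Δ_m, Σ_{t=1}^{T₀}⟨λ_t, g_t(x_t)⟩ ≥ Σ_{t=1}^{T₀}⟨λ, g_t(x_t)⟩ − R^D; (iii) |Σ_{t=1}^{T₀}⟨λ_t, g_t(ξ°)⟩ − Σ_{t=1}^{T₀}⟨λ_t, ḡ(ξ°)⟩| ≤ E; (iv) T₀·ρ/2 ≥ R^D + 2·R^P + 2·E. Then the estimator ρ̂ := −(1/T₀)·( max_{i∈[m]} Σ_{t=1}^{T₀}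 g_{t,i}(x_t) + E ) satisfies ρ̂ ≥ ρ/2. -/
open MeasureTheory Finset

/-! Chaining the primal regret bound, the concentration bound and the feasibility of `ξ°` gives
`Σ_t ⟨λ_t, g_t(x_t)⟩ ≤ -T₀ρ + 2R^P + E`. The dual regret bound, tested against the vertex `e_i`
of the simplex, bounds each coordinate sum `Σ_t g_{t,i}(x_t)` by that quantity plus `R^D`, and
condition (iv) turns the result into `ρ̂ ≥ ρ/2`. -/

theorem sum_mul_le_of_mem_stdSimplex {𝕜 ι : Type*} [Semiring 𝕜] [PartialOrder 𝕜]
    [IsOrderedRing 𝕜] [Fintype ι] {w a : ι → 𝕜} {c : 𝕜} (hw : w ∈ stdSimplex 𝕜 ι)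
    (ha : ∀ i, a i ≤ c) : ∑ i, w i * a i ≤ c :=
  calc ∑ i, w i * a i ≤ ∑ i, w i * c :=
        sum_le_sum fun i _ => mul_le_mul_of_nonneg_left (ha i) (hw.1 i)
    _ = c := by rw [← sum_mul, hw.2, one_mul]

theorem iSup_le_of_forall_mem_stdSimplex {ι : Type*} [Fintype ι] [Nonempty ι] {F : ι → ℝ}
    {c : ℝ} (h : ∀ w ∈ stdSimplex ℝ ι, ∑ i, w i * F i ≤ c) : ⨆ i, F i ≤ c := by
  classical
  exact ciSup_le fun i => by simpa [Pi.single_apply] using h _ (single_mem_stdSimplex ℝ i)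

theorem statement16_general {X : Type} [MeasurableSpace X] {m : ℕ} (hm : 0 < m)
    (T₀ : ℕ) (hT₀ : 1 ≤ T₀)
    (x : ℕ → X) (lam : ℕ → Fin m → ℝ)
    -- the dual iterates lie in the simplex `Δ_m`
    (hlam : ∀ t ∈ Finset.Icc 1 T₀, (∀ i, 0 ≤ lam t i) ∧ ∑ i, lam t i = 1)
    (g : ℕ → Fin m → X → ℝ)
    (gbar : Fin m → X → ℝ)
    (ξo : ProbabilityMeasure X)
    (ρ RP RD E : ℝ)
    (hfeaso : ∀ i, ∫ y, gbar i y ∂(ξo : Measure X) ≤ -ρ)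
    -- (i) primal regret bound
    (h1 : ∑ t ∈ Finset.Icc 1 T₀, (-(∑ i, lam t i * g t i (x t))) ≥
          ∑ t ∈ Finset.Icc 1 T₀,
            (-(∑ i, lam t i * ∫ y, g t i y ∂(ξo : Measure X))) - 2 * RP)
    -- (ii) dual regret bound
    (h2 : ∀ l : Fin m → ℝ, (∀ i, 0 ≤ l i) → (∑ i, l i = 1) →
          ∑ t ∈ Finset.Icc 1 T₀, ∑ i, lam t i * g t i (x t) ≥
          ∑ t ∈ Finset.Icc 1 T₀, ∑ i, l i * g t i (x t) - RD)
    -- (iii) concentration of the constraints at ξ°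
    (h3 : |∑ t ∈ Finset.Icc 1 T₀, ∑ i, lam t i * ∫ y, g t i y ∂(ξo : Measure X) -
            ∑ t ∈ Finset.Icc 1 T₀, ∑ i, lam t i * ∫ y, gbar i y ∂(ξo : Measure X)| ≤ E)
    -- (iv) the horizon is long enough
    (h4 : (T₀ : ℝ) * ρ / 2 ≥ RD + 2 * RP + 2 * E) :
    ρ / 2 ≤ -(1 / (T₀ : ℝ)) * ((⨆ i, ∑ t ∈ Finset.Icc 1 T₀, g t i (x t)) + E) := by
  have : Nonempty (Fin m) := ⟨⟨0, hm⟩⟩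
  have hT : (0 : ℝ) < T₀ := by exact_mod_cast hT₀
  have hfeas : ∑ t ∈ Icc 1 T₀, ∑ i, lam t i * ∫ y, gbar i y ∂(ξo : Measure X) ≤ T₀ * -ρ := by
    simpa using sum_le_card_nsmul _ _ _ fun t ht => sum_mul_le_of_mem_stdSimplex (hlam t ht) hfeaso
  have hmax : (⨆ i, ∑ t ∈ Icc 1 T₀, g t i (x t)) ≤
      ∑ t ∈ Icc 1 T₀, ∑ i, lam t i * g t i (x t) + RD :=
    iSup_le_of_forall_mem_stdSimplex fun w hw => by
      simp_rw [mul_sum]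
      rw [sum_comm]
      linarith [h2 w hw.1 hw.2]
  rw [sum_neg_distrib, sum_neg_distrib] at h1
  obtain ⟨-, h3⟩ := abs_le.mp h3
  rw [neg_mul, one_div_mul_eq_div, le_neg, ← neg_div, div_le_iff₀ hT]
  linarith

/-- The empirical estimator `ρ̂ = −(1/T₀)(max_i Σ_t g_{t,i}(x_t) + E)` is at least half the
feasibility parameter `ρ`. -/
theorem statement16 {X : Type} [MeasurableSpace X] {m : ℕ} (hm : 0 < m)
    (T₀ : ℕ) (hT₀ : 1 ≤ T₀)
    (x : ℕ → X) (lam : ℕ → Fin m → ℝ)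
    -- the dual iterates lie in the simplex `Δ_m`
    (hlam : ∀ t ∈ Finset.Icc 1 T₀, (∀ i, 0 ≤ lam t i) ∧ ∑ i, lam t i = 1)
    (g : ℕ → Fin m → X → ℝ)
    (hgm : ∀ t i, Measurable (g t i)) (hg1 : ∀ t i y, g t i y ∈ Set.Icc (-1:ℝ) 1)
    (gbar : Fin m → X → ℝ) (hgbm : ∀ i, Measurable (gbar i))
    (hgb1 : ∀ i y, gbar i y ∈ Set.Icc (-1:ℝ) 1)
    (ξo : ProbabilityMeasure X)
    (ρ RP RD E : ℝ) (hRP : 0 ≤ RP) (hRD : 0 ≤ RD) (hE : 0 ≤ E)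
    (hfeaso : ∀ i, ∫ y, gbar i y ∂(ξo : Measure X) ≤ -ρ)
    -- (i) primal regret bound
    (h1 : ∑ t ∈ Finset.Icc 1 T₀, (-(∑ i, lam t i * g t i (x t))) ≥
          ∑ t ∈ Finset.Icc 1 T₀,
            (-(∑ i, lam t i * ∫ y, g t i y ∂(ξo : Measure X))) - 2 * RP)
    -- (ii) dual regret bound
    (h2 : ∀ l : Fin m → ℝ, (∀ i, 0 ≤ l i) → (∑ i, l i = 1) →
          ∑ t ∈ Finset.Icc 1 T₀, ∑ i, lam t i * g t i (x t) ≥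
          ∑ t ∈ Finset.Icc 1 T₀, ∑ i, l i * g t i (x t) - RD)
    -- (iii) concentration of the constraints at ξ°
    (h3 : |∑ t ∈ Finset.Icc 1 T₀, ∑ i, lam t i * ∫ y, g t i y ∂(ξo : Measure X) -
            ∑ t ∈ Finset.Icc 1 T₀, ∑ i, lam t i * ∫ y, gbar i y ∂(ξo : Measure X)| ≤ E)
    -- (iv) the horizon is long enough
    (h4 : (T₀ : ℝ) * ρ / 2 ≥ RD + 2 * RP + 2 * E) :
    ρ / 2 ≤ -(1 / (T₀ : ℝ)) * ((⨆ i, ∑ t ∈ Finset.Icc 1 T₀, g t i (x t)) + E) :=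
  statement16_general hm T₀ hT₀ x lam hlam g gbar ξo ρ RP RD E hfeaso h1 h2 h3 h4
end
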